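/- arXiv:1808.02637 — 2 statements merged into one kernel-verified Lean document; each statement's English description precedes it below -/
import Mathlib

section
/- Let N be a finite set of UEs, and for each UE j let C_j ⊆ N be a finite set (its one-hop neighbors). Fix a UE n, a finite set C_{n,d} ⊆ N, and real numbers I_{m n} with 0 ≤ I_{m n} ≤ 1 for all m ∈ N. Define I_d(n,S) = Σ_{j ∈ C_{n,d}} (1 − ∏_{m ∈ C_j ∩ S} (1 − I_{m n})) for finite S ⊆ N. Then for every finite coalition S ⊆ N and every k ∈ S, the exclusive influence of k within S is at most the influence of k alone: I_d(n,S) − I_d(n, S \ {k}) ≤ I_d(n, {k}). -/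
/-! For each receiving UE `j` the exclusive influence of `k` is `(1 - I_k) ∏_{C_j ∩ S \ {k}} (1 - I_m)`
when `k ∈ C_j`, and `0` otherwise. Since the product of factors in `[0, 1]` is at most `1`, this is at
most `1 - ∏_{C_j ∩ {k}} (1 - I_m)`, the influence of `k` alone on `j`; summing over `j` gives the claim. -/

/-- The `d`-influence of a coalition `S` on UE `n`:
`I_d(n,S) = Σ_{j ∈ C_{n,d}} (1 − ∏_{m ∈ C_j ∩ S} (1 − I_{m n}))`. -/
def dInfluence {α : Type*} [DecidableEq α] (Cnd : Finset α) (C : α → Finset α)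
    (I : α → ℝ) (S : Finset α) : ℝ :=
  ∑ j ∈ Cnd, (1 - ∏ m ∈ C j ∩ S, (1 - I m))

open Finset

theorem Finset.prod_erase_sub_prod_le {α : Type*} [DecidableEq α] {t : Finset α} {f : α → ℝ}
    (hf₀ : ∀ m ∈ t, 0 ≤ f m) (hf₁ : ∀ m ∈ t, f m ≤ 1) (k : α) :
    ∏ m ∈ t.erase k, f m - ∏ m ∈ t, f m ≤ 1 - ∏ m ∈ t ∩ {k}, f m := by
  by_cases hk : k ∈ t
  · have hP₀ : 0 ≤ ∏ m ∈ t.erase k, f m :=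
      prod_nonneg fun m hm => hf₀ m (mem_of_mem_erase hm)
    have hP₁ : ∏ m ∈ t.erase k, f m ≤ 1 :=
      prod_le_one (fun m hm => hf₀ m (mem_of_mem_erase hm))
        fun m hm => hf₁ m (mem_of_mem_erase hm)
    rw [← mul_prod_erase t f hk, inter_singleton_of_mem hk, prod_singleton]
    nlinarith [hf₁ k hk]
  · simp [erase_eq_of_notMem hk, inter_singleton_of_notMem hk]

theorem exclusive_influence_le_single_general {α : Type*} [DecidableEq α]
    (N : Finset α) (C : α → Finset α)
    (Cnd : Finset α)
    (I : α → ℝ) (hI : ∀ m ∈ N, 0 ≤ I m ∧ I m ≤ 1)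
    (S : Finset α) (hS : S ⊆ N) (k : α) (hk : k ∈ S) :
    dInfluence Cnd C I S - dInfluence Cnd C I (S \ {k}) ≤
      dInfluence Cnd C I ({k} : Finset α) := by
  unfold dInfluence
  rw [← sum_sub_distrib]
  refine sum_le_sum fun j _ => ?_
  have hremove : C j ∩ (S \ {k}) = (C j ∩ S).erase k := by
    rw [← inter_sdiff_assoc, sdiff_singleton_eq_erase]
  have hsingle : C j ∩ {k} = C j ∩ S ∩ {k} := by
    rw [inter_assoc, inter_singleton_of_mem hk]
  rw [sub_sub_sub_cancel_left, hremove, hsingle]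
  exact prod_erase_sub_prod_le
    (fun m hm => sub_nonneg.mpr (hI m (hS (mem_inter.mp hm).2)).2)
    (fun m hm => sub_le_self _ (hI m (hS (mem_inter.mp hm).2)).1) k

/-- If the one-hop influence weights lie in `[0,1]`, the exclusive influence of
`k` within `S` is at most the influence of `k` alone:
`I_d(n,S) − I_d(n, S \ {k}) ≤ I_d(n, {k})`. -/
theorem exclusive_influence_le_single {α : Type*} [DecidableEq α]
    (N : Finset α) (C : α → Finset α) (hC : ∀ j ∈ N, C j ⊆ N)
    (n : α) (hn : n ∈ N) (Cnd : Finset α) (hCnd : Cnd ⊆ N)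
    (I : α → ℝ) (hI : ∀ m ∈ N, 0 ≤ I m ∧ I m ≤ 1)
    (S : Finset α) (hS : S ⊆ N) (k : α) (hk : k ∈ S) :
    dInfluence Cnd C I S - dInfluence Cnd C I (S \ {k}) ≤
      dInfluence Cnd C I ({k} : Finset α) :=
  exclusive_influence_le_single_general N C Cnd I hI S hS k hk
end

section
/- Let N be a finite set of players, let Cov : N → Finset N, and let α : N → ℝ. Define v(S) = Σ_{n ∈ N, S ∩ Cov(n) ≠ ∅} α_n for finite S ⊆ N, and define the Shapley value of player k as φ_k = Σ_{R ⊆ N \ {k}} ((|N| − |R| − 1)! · |R|! / |N|!) · (v(R ∪ {k}) − v(R)). Then for every k ∈ N, φ_k = Σ_{n ∈ N, k ∈ Cov(n)} α_n / |Cov(n)|. -/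
/-- The weighted coverage characteristic function
`v(S) = Σ_{n ∈ N, S ∩ Cov(n) ≠ ∅} α_n`. -/
def coverageValue {α : Type*} [DecidableEq α] (N : Finset α) (Cov : α → Finset α)
    (a : α → ℝ) (S : Finset α) : ℝ :=
  ∑ n ∈ N.filter (fun n => (S ∩ Cov n).Nonempty), a n

/-- The Shapley value of player `k` in the coalitional game `(N, v)`:
`φ_k = Σ_{R ⊆ N \ {k}} ((|N| − |R| − 1)! · |R|! / |N|!) · (v(R ∪ {k}) − v(R))`. -/
noncomputable def shapleyValue {α : Type*} [DecidableEq α] (N : Finset α)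
    (v : Finset α → ℝ) (k : α) : ℝ :=
  ∑ R ∈ (N \ {k}).powerset,
    (((N.card - R.card - 1).factorial * R.card.factorial : ℕ) : ℝ) /
        (N.card.factorial : ℝ) * (v (insert k R) - v R)


/-! The coverage game is the sum over targets `n` of `a n` times the game "`S` hits `Cov n`", and
the Shapley value is linear in the game. In the game "`S` hits `T`", a player `k ∈ T` contributes
exactly to the coalitions disjoint from `T`, i.e. to `R ⊆ N \ T`, and the Shapley weights of all
subsets of a set `D` add up to `1 / (|N| - |D|)`: this follows by induction on `D` from the
Pascal-type recurrence `w_{m+1}(r) + w_{m+1}(r + 1) = w_m(r)` of the weights. -/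

open Finset

noncomputable def shapleyWeight (m r : ℕ) : ℝ :=
  (((m - r - 1).factorial * r.factorial : ℕ) : ℝ) / (m.factorial : ℝ)

theorem shapleyWeight_succ_add_shapleyWeight_succ {m r : ℕ} (h : r < m) :
    shapleyWeight (m + 1) r + shapleyWeight (m + 1) (r + 1) = shapleyWeight m r := by
  obtain ⟨j, rfl⟩ : ∃ j, m = r + j + 1 := ⟨m - r - 1, by omega⟩
  simp only [shapleyWeight, show r + j + 1 + 1 - r - 1 = j + 1 by omega,
    show r + j + 1 + 1 - (r + 1) - 1 = j by omega, show r + j + 1 - r - 1 = j by omega,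
    Nat.factorial_succ]
  push_cast
  field_simp
  ring

section

variable {α : Type*} [DecidableEq α]

theorem sum_powerset_shapleyWeight (D : Finset α) {m : ℕ}
    (h : #D < m) : ∑ R ∈ D.powerset, shapleyWeight m #R = ((m - #D : ℕ) : ℝ)⁻¹ := by
  induction D using Finset.induction_on generalizing m with
  | empty =>
    obtain ⟨m, rfl⟩ : ∃ m', m = m' + 1 := ⟨m - 1, by simp at h; omega⟩
    simp only [powerset_empty, sum_singleton, card_empty, shapleyWeight, Nat.sub_zero,
      Nat.add_sub_cancel, Nat.factorial_succ, Nat.factorial_zero]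
    push_cast
    field_simp
  | insert x D hx ih =>
    rw [card_insert_of_notMem hx] at h ⊢
    obtain ⟨m, rfl⟩ : ∃ m', m = m' + 1 := ⟨m - 1, by omega⟩
    have hcard : ∀ R ∈ D.powerset, #(insert x R) = #R + 1 := fun R hR =>
      card_insert_of_notMem fun hxR => hx (mem_powerset.mp hR hxR)
    rw [sum_powerset_insert hx, sum_congr rfl fun R hR => congrArg _ (hcard R hR),
      ← sum_add_distrib, Nat.add_sub_add_right, ← ih (by omega)]
    exact sum_congr rfl fun R hR => shapleyWeight_succ_add_shapleyWeight_succ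
      ((card_le_card (mem_powerset.mp hR)).trans_lt (by omega))

section Shapley

variable (N : Finset α) (k : α)

theorem shapleyValue_eq_sum_shapleyWeight (v : Finset α → ℝ) :
    shapleyValue N v k =
      ∑ R ∈ (N \ {k}).powerset, shapleyWeight #N #R * (v (insert k R) - v R) :=
  rfl

theorem shapleyValue_sum {ι : Type*} (s : Finset ι) (v : ι → Finset α → ℝ) :
    shapleyValue N (fun S => ∑ i ∈ s, v i S) k = ∑ i ∈ s, shapleyValue N (v i) k := by
  simp only [shapleyValue_eq_sum_shapleyWeight, ← sum_sub_distrib, mul_sum]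
  exact sum_comm

theorem shapleyValue_const_mul (c : ℝ) (v : Finset α → ℝ) :
    shapleyValue N (fun S => c * v S) k = c * shapleyValue N v k := by
  simp only [shapleyValue_eq_sum_shapleyWeight, mul_sum, ← mul_sub]
  exact sum_congr rfl fun R _ => mul_left_comm _ _ _

theorem shapleyValue_eq_zero_of_forall_insert_eq {v : Finset α → ℝ}
    (h : ∀ S, v (insert k S) = v S) : shapleyValue N v k = 0 := by
  simp [shapleyValue_eq_sum_shapleyWeight, h]

end Shapley

def hittingGame (T S : Finset α) : ℝ :=
  if Disjoint S T then 0 else 1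

theorem coverageValue_eq_sum_hittingGame (N : Finset α)
    (Cov : α → Finset α) (a : α → ℝ) :
    coverageValue N Cov a = fun S => ∑ n ∈ N, a n * hittingGame (Cov n) S := by
  ext S
  simp only [coverageValue, hittingGame, sum_filter, ← not_disjoint_iff_nonempty_inter]
  exact sum_congr rfl fun n _ => by split_ifs <;> simp

theorem hittingGame_insert_of_notMem {T : Finset α} {k : α}
    (hk : k ∉ T) (S : Finset α) : hittingGame T (insert k S) = hittingGame T S := by
  simp [hittingGame, disjoint_insert_left, hk]

theorem hittingGame_insert_sub_of_mem {T : Finset α} {k : α}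
    (hk : k ∈ T) (S : Finset α) :
    hittingGame T (insert k S) - hittingGame T S = if Disjoint S T then 1 else 0 := by
  by_cases hS : Disjoint S T <;> simp [hittingGame, disjoint_insert_left, hk, hS]

theorem shapleyValue_hittingGame {N T : Finset α} {k : α}
    (hTN : T ⊆ N) (hk : k ∈ T) : shapleyValue N (hittingGame T) k = (#T : ℝ)⁻¹ := by
  have hR : (N \ {k}).powerset.filter (fun R => Disjoint R T) = (N \ T).powerset := by
    ext R
    simp only [mem_filter, mem_powerset, subset_sdiff]
    exact ⟨fun ⟨⟨hRN, _⟩, hRT⟩ => ⟨hRN, hRT⟩,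
      fun ⟨hRN, hRT⟩ => ⟨⟨hRN, hRT.mono_right (singleton_subset_iff.mpr hk)⟩, hRT⟩⟩
  have hT : 0 < #T ∧ #T ≤ #N := ⟨card_pos.mpr ⟨k, hk⟩, card_le_card hTN⟩
  have hcard : #(N \ T) = #N - #T := card_sdiff_of_subset hTN
  rw [shapleyValue_eq_sum_shapleyWeight]
  simp only [hittingGame_insert_sub_of_mem hk, mul_ite, mul_one, mul_zero]
  rw [← sum_filter, hR, sum_powerset_shapleyWeight _ (by omega), hcard,
    Nat.sub_sub_self hT.2]

end

theorem coverage_shapley_closed_form_general {α : Type*} [DecidableEq α]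
    (N : Finset α) (Cov : α → Finset α) (hCov : ∀ n ∈ N, Cov n ⊆ N)
    (a : α → ℝ) (k : α) :
    shapleyValue N (coverageValue N Cov a) k =
      ∑ n ∈ N.filter (fun n => k ∈ Cov n), a n / ((Cov n).card : ℝ) := by
  rw [coverageValue_eq_sum_hittingGame, shapleyValue_sum, sum_filter]
  refine sum_congr rfl fun n hn => ?_
  rw [shapleyValue_const_mul]
  split_ifs with hk
  · rw [shapleyValue_hittingGame (hCov n hn) hk, div_eq_mul_inv]
  · rw [shapleyValue_eq_zero_of_forall_insert_eq N k (hittingGame_insert_of_notMem hk), mul_zero]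

/-- Closed form of the Shapley value in the weighted coverage game:
for every `k ∈ N`, `φ_k = Σ_{n ∈ N, k ∈ Cov(n)} α_n / |Cov(n)|`. -/
theorem coverage_shapley_closed_form {α : Type*} [DecidableEq α]
    (N : Finset α) (Cov : α → Finset α) (hCov : ∀ n ∈ N, Cov n ⊆ N)
    (a : α → ℝ) (k : α) (hk : k ∈ N) :
    shapleyValue N (coverageValue N Cov a) k =
      ∑ n ∈ N.filter (fun n => k ∈ Cov n), a n / ((Cov n).card : ℝ) :=
  coverage_shapley_closed_form_general N Cov hCov a k
end
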